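/- arXiv:1306.3546 — 5 statements merged into one kernel-verified Lean document; each statement's English description precedes it below -/
import Mathlib

section
/- Let n ≥ 5 and let F be the step map of the n-cell cyclic-boundary uniform rule-30 CA. Suppose S : ℤ/nℤ → Bool satisfies S(i−1) = 0, S(i) = 1, S(i+1) = 0 for some i ∈ ℤ/nℤ. Then S has at most one predecessor under F: if F(P) = S and F(Q) = S, then P = Q. -/
/-- Wolfram rule 30: `f₃₀(l, c, r) = l XOR (c OR r)`. -/
def rule30 (l c r : Bool) : Bool := xor l (c || r)

/-- The step map of the `n`-cell cyclic-boundary uniform rule-30 CA. -/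
def step30 (n : ℕ) (s : ZMod n → Bool) : ZMod n → Bool :=
  fun i => rule30 (s (i - 1)) (s i) (s (i + 1))

/-- Left-permutivity: a predecessor satisfies `P (j-1) = S j XOR (P j || P (j+1))`. -/
lemma step30_left (n : ℕ) (S P : ZMod n → Bool) (hP : step30 n P = S) (j : ZMod n) :
    P (j - 1) = xor (S j) (P j || P (j + 1)) := by
  have h := congrFun hP j
  simp only [step30, rule30] at h
  rw [← h]
  cases P (j - 1) <;> cases (P j || P (j + 1)) <;> rfl

/-- Any predecessor of a state containing the pattern `010` at `i-1, i, i+1`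
has a `true` at position `i-2`. -/
lemma pred_true (n : ℕ) (S : ZMod n → Bool) (i : ZMod n)
    (h1 : S (i - 1) = false) (h2 : S i = true) (h3 : S (i + 1) = false)
    (P : ZMod n → Bool) (hP : step30 n P = S) : P (i - 2) = true := by
  have e1 := step30_left n S P hP (i - 1)
  have e2 := step30_left n S P hP i
  have e3 := step30_left n S P hP (i + 1)
  rw [h1] at e1; rw [h2] at e2; rw [h3] at e3
  have a1 : i - 1 - 1 = i - 2 := by ring
  have a2 : i - 1 + 1 = i := by ring
  have a3 : i + 1 - 1 = i := by ring
  rw [a1, a2] at e1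
  rw [a3] at e3
  rw [e1, e2, e3]
  cases P (i + 1) <;> cases P (i + 1 + 1) <;> rfl

/-- If the state of an `n`-cell (`n ≥ 5`) cyclic uniform rule-30 CA contains the
pattern `010`, then it has at most one predecessor. -/
theorem rule30_pattern010_unique_predecessor (n : ℕ) (hn : 5 ≤ n)
    (S : ZMod n → Bool) (i : ZMod n)
    (h1 : S (i - 1) = false) (h2 : S i = true) (h3 : S (i + 1) = false)
    (P Q : ZMod n → Bool) (hP : step30 n P = S) (hQ : step30 n Q = S) :
    P = Q := by
  have hn0 : NeZero n := ⟨by omega⟩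
  -- key induction: going leftward from i-2, P and Q agree everywhere
  have key : ∀ k : ℕ, P (i - 2 - k) = Q (i - 2 - k) ∧
      (P (i - 2 - k) || P (i - 2 - k + 1)) = (Q (i - 2 - k) || Q (i - 2 - k + 1)) := by
    intro k
    induction k with
    | zero =>
      have hPt := pred_true n S i h1 h2 h3 P hP
      have hQt := pred_true n S i h1 h2 h3 Q hQ
      simp only [Nat.cast_zero, sub_zero]
      rw [hPt, hQt]
      simp
    | succ k ih =>
      obtain ⟨ihv, ihor⟩ := ih
      have hidx : i - 2 - (k + 1 : ℕ) = (i - 2 - k) - 1 := by push_cast; ring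
      have eP := step30_left n S P hP (i - 2 - k)
      have eQ := step30_left n S Q hQ (i - 2 - k)
      have hv : P (i - 2 - (k + 1 : ℕ)) = Q (i - 2 - (k + 1 : ℕ)) := by
        rw [hidx, eP, eQ, ihor]
      refine ⟨hv, ?_⟩
      have hidx2 : i - 2 - (k + 1 : ℕ) + 1 = i - 2 - k := by push_cast; ring
      rw [hv, hidx2, ihv]
  funext j
  have hcast : ((i - 2 - j).val : ZMod n) = i - 2 - j := ZMod.natCast_val _ |>.trans (ZMod.cast_id _ _)
  have hj : i - 2 - ((i - 2 - j).val : ZMod n) = j := by rw [hcast]; ring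
  have := (key (i - 2 - j).val).1
  rwa [hj] at this
end

section
/- Let F be the step map of an n-cell cyclic-boundary uniform rule-30 CA and let S : ℤ/nℤ → Bool be any state. If two temporally adjacent 1s occur in the temporal sequence of cell i, i.e. S(i) = 1 and (F S)(i) = 1, then the value of cell i−2 at the earlier time is determined by the temporal sequence: S(i−2) = (F(F S))(i). -/
/-- In a cyclic uniform rule-30 CA, two temporally adjacent `1`s at cell `i`
determine the value of cell `i − 2` at the earlier time from the temporal
sequence: `S(i−2) = (F(F S))(i)`. -/
theorem rule30_two_ones_determine (n : ℕ) (hn : 1 ≤ n)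
    (S : ZMod n → Bool) (i : ZMod n)
    (h1 : S i = true) (h2 : step30 n S i = true) :
    S (i - 2) = step30 n (step30 n S) i := by
  simp only [step30, rule30] at *
  have e1 : i - 1 + 1 = i := by ring
  have e2 : i - 1 - 1 = i - 2 := by ring
  rw [e1, e2]
  rw [h1] at h2 ⊢
  simp at h2
  rw [h2]
  cases hS : S (i - 2) <;> simp [hS, h1]
end

section
/- Let F be the step map of an n-cell cyclic-boundary hybrid CA in which every cell's rule f_i is left-toggle. If P, Q : ℤ/nℤ → Bool satisfy F(P) = F(Q), and P(j) = Q(j) and P(j+1) = Q(j+1) for some j ∈ ℤ/nℤ, then P = Q; that is, a predecessor of a given state is uniquely determined by its values on any two adjacent cells. -/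
/-- A local rule `f : Bool³ → Bool` is *left-toggle* if complementing its left
input complements its output. -/
def LeftToggle (f : Bool → Bool → Bool → Bool) : Prop :=
  ∀ l c r : Bool, f (!l) c r = !(f l c r)

/-- The step map of an `n`-cell cyclic-boundary hybrid CA with local rules `f i`. -/
def hybridStep (n : ℕ) (f : ZMod n → Bool → Bool → Bool → Bool)
    (s : ZMod n → Bool) : ZMod n → Bool :=
  fun i => f i (s (i - 1)) (s i) (s (i + 1))

/-- In a cyclic hybrid CA whose rules are all left-toggle, a predecessor of a
given state is uniquely determined by its values on two adjacent cells. -/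
theorem leftToggle_predecessor_determined_by_two_adjacent (n : ℕ) (hn : 1 ≤ n)
    (f : ZMod n → Bool → Bool → Bool → Bool) (hf : ∀ i, LeftToggle (f i))
    (P Q : ZMod n → Bool) (hPQ : hybridStep n f P = hybridStep n f Q)
    (j : ZMod n) (h1 : P j = Q j) (h2 : P (j + 1) = Q (j + 1)) :
    P = Q := by
  have hinj : ∀ i (l l' c r : Bool), f i l c r = f i l' c r → l = l' := by
    intro i l l' c r h
    by_contra hne
    have hl' : l' = !l := by cases l <;> cases l' <;> simp_all
    rw [hl', hf i l c r] at h
    exact (Bool.not_ne_self _).symm h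
  have key : ∀ k : ℕ, P (j - k) = Q (j - k) ∧ P (j - k + 1) = Q (j - k + 1) := by
    intro k
    induction k with
    | zero => simpa using ⟨h1, h2⟩
    | succ k ih =>
      obtain ⟨hc, hr⟩ := ih
      have heq : hybridStep n f P (j - k) = hybridStep n f Q (j - k) := by rw [hPQ]
      unfold hybridStep at heq
      rw [hc, hr] at heq
      have hl := hinj _ _ _ _ _ heq
      constructor
      · have : j - (↑(k + 1) : ZMod n) = j - k - 1 := by push_cast; ring
        rw [this]; exact hl
      · have : j - (↑(k + 1) : ZMod n) + 1 = j - k := by push_cast; ring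
        rw [this]; exact hc
  haveI : NeZero n := ⟨Nat.one_le_iff_ne_zero.mp hn⟩
  funext i
  have : i = j - (↑((j - i).val) : ZMod n) := by
    rw [ZMod.natCast_val, ZMod.cast_id]; ring
  rw [this]
  exact (key _).1
end

section
/- Let f : Bool³ → Bool be a left-toggle local rule and let k ≥ 1. For every output window y : Fin k → Bool, the set of input windows x : Fin (k+2) → Bool satisfying f(x(j), x(j+1), x(j+2)) = y(j) for every j < k has exactly 4 elements; moreover such an x is uniquely determined by y together with its two rightmost bits x(k) and x(k+1). -/
/-- The set of input windows of length `k + 2` mapping to the output window `y`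
of length `k` under the local rule `f`. -/
def inputWindows (f : Bool → Bool → Bool → Bool) (k : ℕ) (y : Fin k → Bool) :
    Set (Fin (k + 2) → Bool) :=
  {x | ∀ j : Fin k,
    f (x (Fin.castLE (by omega) j)) (x (Fin.castLE (by omega) j.succ)) (x j.succ.succ) = y j}

/-- The unique left input producing output `v` given center `c`, right `r`. -/
def leftInv (f : Bool → Bool → Bool → Bool) (c r v : Bool) : Bool :=
  if f false c r = v then false else true

lemma leftInv_spec (f : Bool → Bool → Bool → Bool) (hf : LeftToggle f)
    (c r v : Bool) : f (leftInv f c r v) c r = v := by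
  have h := hf false c r
  simp only [Bool.not_false] at h
  unfold leftInv
  by_cases hc : f false c r = v
  · simp [hc]
  · simp only [hc, if_false, h]
    cases hv : f false c r <;> cases v <;> simp_all

lemma leftInj (f : Bool → Bool → Bool → Bool) (hf : LeftToggle f)
    {a b c r : Bool} (h : f a c r = f b c r) : a = b := by
  have h1 := hf false c r
  simp only [Bool.not_false] at h1
  cases a <;> cases b <;> simp_all <;>
    · cases hv : f false c r <;> simp_all

/-- Build the window from right to left: index `n` is position `k+1-n`. -/
def buildAux (f : Bool → Bool → Bool → Bool) (k : ℕ) (y : Fin k → Bool)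
    (a b : Bool) : ℕ → Bool
  | 0 => b
  | 1 => a
  | (n+2) =>
    if h : n < k then
      leftInv f (buildAux f k y a b (n+1)) (buildAux f k y a b n)
        (y ⟨k - 1 - n, by omega⟩)
    else false


lemma buildAux_succ (f : Bool → Bool → Bool → Bool) (k m : ℕ) (hmk : m < k)
    (y : Fin k → Bool) (a b : Bool) :
    buildAux f k y a b (m + 2)
      = leftInv f (buildAux f k y a b (m+1)) (buildAux f k y a b m)
          (y ⟨k - 1 - m, by omega⟩) := by
  rw [buildAux]; simp [hmk]

/-- The window determined by its two rightmost bits `a` (at `k`) and `b` (at `k+1`). -/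
def buildWin (f : Bool → Bool → Bool → Bool) (k : ℕ) (y : Fin k → Bool)
    (p : Bool × Bool) : Fin (k + 2) → Bool :=
  fun i => buildAux f k y p.1 p.2 (k + 1 - (i : ℕ))

lemma buildWin_mem (f : Bool → Bool → Bool → Bool) (hf : LeftToggle f) (k : ℕ)
    (y : Fin k → Bool) (p : Bool × Bool) : buildWin f k y p ∈ inputWindows f k y := by
  intro j
  have hjk : (j : ℕ) < k := j.isLt
  obtain ⟨m, hmk, hm⟩ : ∃ m, m < k ∧ (j : ℕ) + m = k - 1 :=
    ⟨k - 1 - (j : ℕ), by omega, by omega⟩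
  have hc0 : k + 1 - ((Fin.castLE (by omega : k ≤ k + 2) j : Fin (k+2)) : ℕ) = m + 2 := by
    simp only [Fin.coe_castLE]; omega
  have hc1 : k + 1 - ((Fin.castLE (by omega : k + 1 ≤ k + 2) j.succ : Fin (k+2)) : ℕ)
      = m + 1 := by
    simp only [Fin.coe_castLE, Fin.val_succ]; omega
  have hc2 : k + 1 - ((j.succ.succ : Fin (k+2)) : ℕ) = m := by
    simp only [Fin.val_succ]; omega
  have hidx : (⟨k - 1 - m, by omega⟩ : Fin k) = j :=
    Fin.ext (by simp only [Fin.val_mk]; omega)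
  show f (buildAux f k y p.1 p.2 _) (buildAux f k y p.1 p.2 _) (buildAux f k y p.1 p.2 _) = y j
  rw [hc0, hc1, hc2, buildAux_succ f k m hmk, hidx]
  exact leftInv_spec f hf _ _ _

lemma buildWin_right (f : Bool → Bool → Bool → Bool) (k : ℕ) (hk : 1 ≤ k)
    (y : Fin k → Bool) (p : Bool × Bool) :
    buildWin f k y p ⟨k, Nat.lt_add_of_pos_right Nat.two_pos⟩ = p.1 ∧ buildWin f k y p ⟨k + 1, Nat.lt_succ_self (k + 1)⟩ = p.2 := by
  constructor <;> · show buildAux f k y p.1 p.2 _ = _; norm_num [buildAux]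

/-- For a left-toggle rule and any output window of length `k ≥ 1`, there are
exactly 4 compatible input windows of length `k + 2`, and such a window is
uniquely determined by its two rightmost bits. -/
theorem leftToggle_window_preimage (f : Bool → Bool → Bool → Bool)
    (hf : LeftToggle f) (k : ℕ) (hk : 1 ≤ k) (y : Fin k → Bool) :
    Set.ncard (inputWindows f k y) = 4 ∧
    ∀ x ∈ inputWindows f k y, ∀ x' ∈ inputWindows f k y,
      x ⟨k, by omega⟩ = x' ⟨k, by omega⟩ →
      x ⟨k + 1, by omega⟩ = x' ⟨k + 1, by omega⟩ → x = x' := by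
  -- uniqueness part first
  have huniq : ∀ x ∈ inputWindows f k y, ∀ x' ∈ inputWindows f k y,
      x ⟨k, by omega⟩ = x' ⟨k, by omega⟩ →
      x ⟨k + 1, by omega⟩ = x' ⟨k + 1, by omega⟩ → x = x' := by
    intro x hx x' hx' h1 h2
    have key : ∀ n : ℕ, ∀ i : Fin (k + 2), (i : ℕ) + n = k + 1 → x i = x' i := by
      intro n
      induction n using Nat.strong_induction_on with
      | _ n ih =>
        intro i hi
        match n, hi with
        | 0, hi =>
          have : i = ⟨k + 1, by omega⟩ := Fin.ext (by simp only [Fin.val_mk]; omega)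
          rw [this]; exact h2
        | 1, hi =>
          have : i = ⟨k, by omega⟩ := Fin.ext (by simp only [Fin.val_mk]; omega)
          rw [this]; exact h1
        | (m+2), hi =>
          have hik : (i : ℕ) < k := by omega
          have e0 : (Fin.castLE (by omega : k ≤ k + 2) (⟨i, hik⟩ : Fin k)) = i :=
            Fin.ext rfl
          have e1 : x (Fin.castLE (by omega : k + 1 ≤ k + 2) (⟨i, hik⟩ : Fin k).succ)
              = x' (Fin.castLE (by omega) (⟨i, hik⟩ : Fin k).succ) :=
            ih (m+1) (by omega) _ (show (i : ℕ) + 1 + (m+1) = k + 1 by omega)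
          have e2 : x (⟨i, hik⟩ : Fin k).succ.succ = x' (⟨i, hik⟩ : Fin k).succ.succ :=
            ih m (by omega) _ (show (i : ℕ) + 1 + 1 + m = k + 1 by omega)
          have q1 := hx ⟨i, hik⟩
          have q2 := hx' ⟨i, hik⟩
          rw [e0] at q1 q2
          rw [e1, e2, ← q2] at q1
          exact leftInj f hf q1
    funext i
    exact key (k + 1 - i) i (by omega)
  refine ⟨?_, huniq⟩
  have hφk := fun p => (buildWin_right f k hk y p).1
  have hφk1 := fun p => (buildWin_right f k hk y p).2
  have hset : inputWindows f k y = buildWin f k y '' Set.univ := by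
    ext x
    constructor
    · intro hx
      refine ⟨(x ⟨k, by omega⟩, x ⟨k + 1, by omega⟩), Set.mem_univ _, ?_⟩
      exact (huniq x hx _ (buildWin_mem f hf k y _) (by rw [hφk]) (by rw [hφk1])).symm
    · rintro ⟨p, -, rfl⟩
      exact buildWin_mem f hf k y p
  have hinj : Function.Injective (buildWin f k y) := by
    intro p q h
    have ha : p.1 = q.1 := by rw [← hφk p, ← hφk q, h]
    have hb : p.2 = q.2 := by rw [← hφk1 p, ← hφk1 q, h]
    exact Prod.ext ha hb
  rw [hset, Set.ncard_image_of_injective _ hinj, Set.ncard_univ]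
  simp [Nat.card_eq_fintype_card]
end

section
/- Let n be odd and let F be the step map of an n-cell cyclic-boundary affine CA over GF(2) whose rule vector is symmetric about the center cell, i.e. w_i = w_{n−1−i} and b_i = b_{n−1−i} for all i (0-indexed). Let m = (n−1)/2 denote the center cell. Then for every sequence σ : Fin ((n+1)/2) → GF(2), the number of initial states s : ℤ/nℤ → GF(2) whose center temporal sequence of length ⌈n/2⌉ equals σ, i.e. (F^t s)(m) = σ(t) for all t < (n+1)/2, is exactly 2^{⌊n/2⌋} = 2^{(n−1)/2}. -/
/-- The step map of an `n`-cell cyclic-boundary affine CA over GF(2):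
`(F s)(i) = s(i−1) + wᵢ·s(i) + s(i+1) + bᵢ`.  The parameter choices
`(wᵢ, bᵢ) = (0,0), (1,0), (0,1), (1,1)` correspond to Wolfram rules
90, 150, 165 and 105 respectively. -/
def affineStep (n : ℕ) (w b : ZMod n → ZMod 2) (s : ZMod n → ZMod 2) :
    ZMod n → ZMod 2 :=
  fun i => s (i - 1) + w i * s i + s (i + 1) + b i

/-- The linear part of `affineStep`. -/
def lstep (n : ℕ) (w : ZMod n → ZMod 2) (v : ZMod n → ZMod 2) : ZMod n → ZMod 2 :=
  fun i => v (i - 1) + w i * v i + v (i + 1)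

lemma lstep_add {n : ℕ} (w : ZMod n → ZMod 2) (a c : ZMod n → ZMod 2) :
    lstep n w (a + c) = lstep n w a + lstep n w c := by
  funext i; simp only [lstep, Pi.add_apply]; ring

lemma lstep_iter_add {n : ℕ} (w : ZMod n → ZMod 2) (t : ℕ) (a c : ZMod n → ZMod 2) :
    (lstep n w)^[t] (a + c) = (lstep n w)^[t] a + (lstep n w)^[t] c := by
  induction t generalizing a c with
  | zero => rfl
  | succ t ih =>
      rw [Function.iterate_succ_apply, Function.iterate_succ_apply,
        Function.iterate_succ_apply, lstep_add, ih]

lemma lstep_iter_zero {n : ℕ} (w : ZMod n → ZMod 2) (t : ℕ) :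
    (lstep n w)^[t] 0 = 0 := by
  induction t with
  | zero => rfl
  | succ t ih =>
      rw [Function.iterate_succ_apply]
      have h : lstep n w 0 = 0 := by funext i; simp [lstep]
      rw [h, ih]

lemma affine_iter_add {n : ℕ} (w b : ZMod n → ZMod 2) (t : ℕ)
    (s v : ZMod n → ZMod 2) :
    (affineStep n w b)^[t] (s + v)
      = (affineStep n w b)^[t] s + (lstep n w)^[t] v := by
  induction t generalizing s v with
  | zero => rfl
  | succ t ih =>
      rw [Function.iterate_succ_apply, Function.iterate_succ_apply,
        Function.iterate_succ_apply]
      have h1 : affineStep n w b (s + v) = affineStep n w b s + lstep n w v := by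
        funext i; simp only [affineStep, lstep, Pi.add_apply]; ring
      rw [h1, ih]

lemma lightcone_zero {n : ℕ} (w : ZMod n → ZMod 2) (t : ℕ)
    (v : ZMod n → ZMod 2) (i : ZMod n)
    (h : ∀ d : ℤ, d.natAbs ≤ t → v (i + (d : ZMod n)) = 0) :
    (lstep n w)^[t] v i = 0 := by
  induction t generalizing v with
  | zero => simpa using h 0 (by simp)
  | succ t ih =>
      rw [Function.iterate_succ_apply]
      refine ih (lstep n w v) ?_
      intro d hd
      have h1 := h (d - 1) (by omega)
      have h2 := h d (by omega)
      have h3 := h (d + 1) (by omega)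
      push_cast at h1 h3
      simp only [lstep]
      rw [add_sub_assoc, add_assoc i _ 1, h1, h2, h3]
      ring

lemma lightcone_one {n : ℕ} (w : ZMod n → ZMod 2) (t : ℕ)
    (v : ZMod n → ZMod 2) (i : ZMod n)
    (h : ∀ d : ℤ, d.natAbs ≤ t → v (i + (d : ZMod n)) = if d = (t : ℤ) then 1 else 0) :
    (lstep n w)^[t] v i = 1 := by
  induction t generalizing v with
  | zero => simpa using h 0 (by simp)
  | succ t ih =>
      rw [Function.iterate_succ_apply]
      refine ih (lstep n w v) ?_
      intro d hd
      have h1 := h (d - 1) (by omega)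
      have h2 := h d (by omega)
      have h3 := h (d + 1) (by omega)
      rw [if_neg (by omega)] at h1
      rw [if_neg (by omega)] at h2
      push_cast at h1 h3
      simp only [lstep]
      rw [add_sub_assoc, add_assoc i _ 1, h1, h2, h3]
      by_cases hdt : d = (t : ℤ)
      · rw [if_pos (by omega), if_pos hdt]; ring
      · rw [if_neg (by omega), if_neg hdt]; ring

/-- The linear map sending a seed to its first `k` center temporal values. -/
def Lmap (n k : ℕ) (w : ZMod n → ZMod 2) :
    (ZMod n → ZMod 2) →ₗ[ZMod 2] (Fin k → ZMod 2) where
  toFun v := fun t => (lstep n w)^[t.1] v (((n - 1) / 2 : ℕ) : ZMod n)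
  map_add' a c := by
    funext t
    have := congrFun (lstep_iter_add w t.1 a c) (((n - 1) / 2 : ℕ) : ZMod n)
    simpa using this
  map_smul' c v := by
    have hc : c = 0 ∨ c = 1 := by revert c; decide
    rcases hc with rfl | rfl
    · funext t
      simp only [zero_smul, RingHom.id_apply]
      have := congrFun (lstep_iter_zero w t.1) (((n - 1) / 2 : ℕ) : ZMod n)
      simpa using this
    · simp

/-- For an odd-length symmetric cyclic affine CA over GF(2), every prescribed
center temporal sequence of length `⌈n/2⌉` is produced by exactly
`2^{⌊n/2⌋}` initial states. -/
theorem symmetric_affine_CA_seed_count (n : ℕ) (hn : Odd n)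
    (w b : ZMod n → ZMod 2)
    (hw : ∀ i : ZMod n, w (-1 - i) = w i)
    (hb : ∀ i : ZMod n, b (-1 - i) = b i)
    (σ : Fin ((n + 1) / 2) → ZMod 2) :
    Set.ncard {s : ZMod n → ZMod 2 |
        ∀ t : Fin ((n + 1) / 2),
          (affineStep n w b)^[t.1] s (((n - 1) / 2 : ℕ) : ZMod n) = σ t}
      = 2 ^ ((n - 1) / 2) := by
  classical
  obtain ⟨mh, hnm⟩ := hn
  haveI : NeZero n := ⟨by omega⟩
  have h2k : 2 * ((n + 1) / 2) = n + 1 := by omega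
  set mm : ZMod n := (((n - 1) / 2 : ℕ) : ZMod n) with hmm
  set vj : Fin ((n + 1) / 2) → ZMod n → ZMod 2 :=
    fun j i => if i = mm + ((j : ℕ) : ZMod n) then 1 else 0 with hvj
  set L := Lmap n ((n + 1) / 2) w with hL
  -- value of the delta seeds at cells near the center
  have hdelta : ∀ (j : Fin ((n + 1) / 2)) (d : ℤ), d.natAbs < (n + 1) / 2 →
      vj j (mm + (d : ZMod n)) = if d = ((j : ℕ) : ℤ) then 1 else 0 := by
    intro j d hd
    have hj : (j : ℕ) < (n + 1) / 2 := j.2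
    have key : mm + (d : ZMod n) = mm + (((j : ℕ)) : ZMod n) ↔ d = ((j : ℕ) : ℤ) := by
      constructor
      · intro h
        have h0 : ((d : ℤ) : ZMod n) = (((j : ℕ) : ℤ) : ZMod n) := by
          push_cast
          exact add_left_cancel h
        have hdvd : (n : ℤ) ∣ ((j : ℕ) : ℤ) - d :=
          ((ZMod.intCast_eq_intCast_iff _ _ _).mp h0).dvd
        have habs : |((j : ℕ) : ℤ) - d| < (n : ℤ) := by
          rw [abs_lt]; omega
        have := Int.eq_zero_of_abs_lt_dvd hdvd habs
        omega
      · intro h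
        have h0 : (d : ZMod n) = ((j : ℕ) : ZMod n) := by
          rw [h]; push_cast; ring
        rw [h0]
    simp only [hvj]
    by_cases hdj : d = ((j : ℕ) : ℤ)
    · rw [if_pos (key.mpr hdj), if_pos hdj]
    · rw [if_neg (fun hh => hdj (key.mp hh)), if_neg hdj]
  set M : Matrix (Fin ((n + 1) / 2)) (Fin ((n + 1) / 2)) (ZMod 2) :=
    Matrix.of (fun t j => L (vj j) t) with hM
  have hMapp : ∀ t j : Fin ((n + 1) / 2), M t j = (lstep n w)^[t.1] (vj j) mm :=
    fun t j => rfl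
  have hMlow : ∀ t j : Fin ((n + 1) / 2), (t : ℕ) < (j : ℕ) → M t j = 0 := by
    intro t j htj
    rw [hMapp]
    apply lightcone_zero
    intro d hd
    rw [hdelta j d (by omega), if_neg (by omega)]
  have hMdiag : ∀ t : Fin ((n + 1) / 2), M t t = 1 := by
    intro t
    rw [hMapp]
    apply lightcone_one
    intro d hd
    rw [hdelta t d (by omega)]
  have hdet : M.det = 1 := by
    rw [Matrix.det_of_lowerTriangular M ?_]
    · simp [hMdiag]
    · intro i j hij
      exact hMlow i j hij
  have hMunit : IsUnit M := (Matrix.isUnit_iff_isUnit_det M).mpr (hdet ▸ isUnit_one)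
  have hMsurj : Function.Surjective M.mulVec :=
    Matrix.mulVec_surjective_iff_isUnit.mpr hMunit
  have hLsurj : Function.Surjective L := by
    intro τ
    obtain ⟨c, hc⟩ := hMsurj τ
    refine ⟨∑ j, c j • vj j, ?_⟩
    funext t
    rw [map_sum]
    simp only [map_smul]
    rw [← hc]
    simp only [Finset.sum_apply, Pi.smul_apply, smul_eq_mul, Matrix.mulVec,
      dotProduct, hM, Matrix.of_apply]
    exact Finset.sum_congr rfl (fun j _ => mul_comm _ _)
  -- kernel size
  have h3 : Module.finrank (ZMod 2) (ZMod n → ZMod 2) = n := by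
    simp [Module.finrank_pi, ZMod.card]
  have h2 : Module.finrank (ZMod 2) (Fin ((n + 1) / 2) → ZMod 2) = (n + 1) / 2 := by
    simp [Module.finrank_pi]
  have hrank : Module.finrank (ZMod 2) (LinearMap.ker L) = n - (n + 1) / 2 := by
    have h1 := LinearMap.finrank_range_add_finrank_ker L
    rw [LinearMap.range_eq_top.mpr hLsurj, finrank_top, h2, h3] at h1
    omega
  haveI : Fintype (LinearMap.ker L) := Fintype.ofFinite _
  have hcard : Nat.card (LinearMap.ker L) = 2 ^ (n - (n + 1) / 2) := by
    rw [Nat.card_eq_fintype_card, Module.card_eq_pow_finrank (K := ZMod 2), ZMod.card, hrank]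
  -- base point
  obtain ⟨v0, hv0⟩ := hLsurj (fun t => σ t - (affineStep n w b)^[t.1] 0 mm)
  have hv0' : ∀ t : Fin ((n + 1) / 2),
      (lstep n w)^[t.1] v0 mm = σ t - (affineStep n w b)^[t.1] 0 mm :=
    fun t => congrFun hv0 t
  have hs0 : ∀ t : Fin ((n + 1) / 2), (affineStep n w b)^[t.1] v0 mm = σ t := by
    intro t
    have h1 := congrFun (affine_iter_add w b t.1 0 v0) mm
    rw [zero_add] at h1
    rw [h1]
    simp only [Pi.add_apply]
    rw [hv0' t]
    ring
  -- the solution set is a coset of the kernel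
  have hset : {s : ZMod n → ZMod 2 |
        ∀ t : Fin ((n + 1) / 2), (affineStep n w b)^[t.1] s mm = σ t}
      = (fun u => v0 + u) '' (LinearMap.ker L : Set (ZMod n → ZMod 2)) := by
    ext s
    simp only [Set.mem_setOf_eq, Set.mem_image, SetLike.mem_coe, LinearMap.mem_ker]
    constructor
    · intro hs
      refine ⟨s - v0, ?_, by abel⟩
      funext t
      have h1 := congrFun (affine_iter_add w b t.1 v0 (s - v0)) mm
      rw [add_sub_cancel] at h1
      have h4 := hs t
      rw [h1, Pi.add_apply, hs0 t] at h4
      show (lstep n w)^[t.1] (s - v0) mm = 0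
      calc (lstep n w)^[t.1] (s - v0) mm
          = σ t + (lstep n w)^[t.1] (s - v0) mm - σ t := by ring
        _ = 0 := by rw [h4]; ring
    · rintro ⟨u, hu, rfl⟩ t
      have h1 := congrFun (affine_iter_add w b t.1 v0 u) mm
      rw [h1, Pi.add_apply, hs0 t]
      have h2 : (lstep n w)^[t.1] u mm = 0 := congrFun hu t
      rw [h2, add_zero]
  rw [hset, Set.ncard_image_of_injective _ (add_right_injective v0)]
  have hfinal : (LinearMap.ker L : Set (ZMod n → ZMod 2)).ncard = 2 ^ (n - (n + 1) / 2) := by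
    rw [← Nat.card_coe_set_eq]
    exact hcard
  rw [hfinal]
  congr 1
  omega
end
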